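/- Let ε₁, ε₂ ∈ [0,1] and 0 ≤ δ₁ ≤ δ₂. If x⁽¹⁾ is an (ε₁, δ₁)-coarsening of x ∈ ℝ_{≥0}^E and x⁽²⁾ is an (ε₂, δ₂)-coarsening of x⁽¹⁾, then x⁽²⁾ is an (ε₁ + 2ε₂, δ₂)-coarsening of x. -/
import Mathlib


open Finset

variable {V : Type*} [Fintype V] [DecidableEq V]

/-- The fractional degree `x(v) := Σ_{e ∋ v} x_e` of a vertex `v` under `x`. -/
noncomputable def fracDeg (x : Sym2 V → ℝ) (v : V) : ℝ :=
  ∑ e : Sym2 V, if v ∈ e then x e else 0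

/-- `‖x‖ := Σ_e x_e`. -/
noncomputable def vnorm (x : Sym2 V → ℝ) : ℝ :=
  ∑ e : Sym2 V, x e

/-- `d^ε_V(x,y) := Σ_{v∈V} max(|x(v) − y(v)| − ε, 0)`. -/
noncomputable def dV (ε : ℝ) (x y : Sym2 V → ℝ) : ℝ :=
  ∑ v : V, max (|fracDeg x v - fracDeg y v| - ε) 0

/-- `x'` is an `(ε,δ)`-coarsening of `x`: `x' ∈ ℝ_{≥0}^E` with
(C0) `supp(x') ⊆ supp(x)`; (C1) `|‖x‖ − ‖x'‖| ≤ ε‖x‖ + ε`; (C2) `d^ε_V(x,x') ≤ ε‖x‖ + ε`;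
(C3) `x'_e ∈ {0} ∪ [δ, 2δ)` whenever `x_e < δ`, and `x'_e = x_e` whenever `x_e ≥ δ`. -/
def IsCoarsening (ε δ : ℝ) (x x' : Sym2 V → ℝ) : Prop :=
  (∀ e, 0 ≤ x' e) ∧
  (∀ e, x' e ≠ 0 → x e ≠ 0) ∧
  |vnorm x - vnorm x'| ≤ ε * vnorm x + ε ∧
  dV ε x x' ≤ ε * vnorm x + ε ∧
  (∀ e, x e < δ → x' e = 0 ∨ (δ ≤ x' e ∧ x' e < 2 * δ)) ∧
  (∀ e, δ ≤ x e → x' e = x e)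

/-- A coarsening is bounded if additionally (C4) `x'(v) ≤ x(v) + ε` for every vertex `v`. -/
def IsBoundedCoarsening (ε δ : ℝ) (x x' : Sym2 V → ℝ) : Prop :=
  IsCoarsening ε δ x x' ∧ ∀ v : V, fracDeg x' v ≤ fracDeg x v + ε

lemma dV_mono {ε ε' : ℝ} (h : ε ≤ ε') (x y : Sym2 V → ℝ) : dV ε' x y ≤ dV ε x y :=
  Finset.sum_le_sum fun v _ => max_le_max (by linarith) le_rfl

lemma dV_tri (ε₁ ε₂ : ℝ) (x y z : Sym2 V → ℝ) :
    dV (ε₁ + ε₂) x z ≤ dV ε₁ x y + dV ε₂ y z := by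
  unfold dV
  rw [← Finset.sum_add_distrib]
  refine Finset.sum_le_sum fun v _ => ?_
  have habs := abs_sub_le (fracDeg x v) (fracDeg y v) (fracDeg z v)
  refine max_le ?_ (add_nonneg (le_max_right _ _) (le_max_right _ _))
  calc |fracDeg x v - fracDeg z v| - (ε₁ + ε₂)
      ≤ (|fracDeg x v - fracDeg y v| - ε₁) + (|fracDeg y v - fracDeg z v| - ε₂) := by linarith
    _ ≤ _ := add_le_add (le_max_left _ _) (le_max_left _ _)

/-- Let `ε₁, ε₂ ∈ [0,1]` and `0 ≤ δ₁ ≤ δ₂`.  If `x⁽¹⁾` is an `(ε₁, δ₁)`-coarsening of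
`x ∈ ℝ_{≥0}^E` and `x⁽²⁾` is an `(ε₂, δ₂)`-coarsening of `x⁽¹⁾`, then `x⁽²⁾` is an
`(ε₁ + 2ε₂, δ₂)`-coarsening of `x`. -/
theorem stmt_14 (G : SimpleGraph V) (ε₁ ε₂ δ₁ δ₂ : ℝ)
    (hε₁0 : 0 ≤ ε₁) (hε₁1 : ε₁ ≤ 1) (hε₂0 : 0 ≤ ε₂) (hε₂1 : ε₂ ≤ 1)
    (hδ₁ : 0 ≤ δ₁) (hδ : δ₁ ≤ δ₂)
    (x x1 x2 : Sym2 V → ℝ)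
    (hxnn : ∀ e, 0 ≤ x e) (hsupp : ∀ e, x e ≠ 0 → e ∈ G.edgeSet)
    (h1 : IsCoarsening ε₁ δ₁ x x1)
    (h2 : IsCoarsening ε₂ δ₂ x1 x2) :
    IsCoarsening (ε₁ + 2 * ε₂) δ₂ x x2 := by
  obtain ⟨h1nn, h1s, h1n, h1d, h1c, h1c'⟩ := h1
  obtain ⟨h2nn, h2s, h2n, h2d, h2c, h2c'⟩ := h2
  have hxn0 : 0 ≤ vnorm x := Finset.sum_nonneg fun e _ => hxnn e
  have habs1 := abs_le.mp h1n
  have hx1 : vnorm x1 ≤ 2 * vnorm x + 1 := by nlinarith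
  refine ⟨h2nn, fun e he => h1s e (h2s e he), ?_, ?_, ?_, ?_⟩
  · have htri := abs_sub_le (vnorm x) (vnorm x1) (vnorm x2)
    nlinarith
  · calc dV (ε₁ + 2 * ε₂) x x2 ≤ dV (ε₁ + ε₂) x x2 := dV_mono (by linarith) _ _
      _ ≤ dV ε₁ x x1 + dV ε₂ x1 x2 := dV_tri _ _ _ _ _
      _ ≤ (ε₁ + 2 * ε₂) * vnorm x + (ε₁ + 2 * ε₂) := by nlinarith
  · intro e he
    by_cases h1e : x e < δ₁
    · rcases h1c e h1e with h0 | ⟨hl, hu⟩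
      · by_cases hlt : x1 e < δ₂
        · exact h2c e hlt
        · left
          rw [h2c' e (not_lt.mp hlt), h0]
      · by_cases hlt : x1 e < δ₂
        · exact h2c e hlt
        · right
          rw [h2c' e (not_lt.mp hlt)]
          exact ⟨not_lt.mp hlt, by linarith⟩
    · have := h1c' e (not_lt.mp h1e)
      apply h2c
      rw [this]; exact he
  · intro e he
    rw [h2c' e, h1c' e (by linarith)]
    rw [h1c' e (by linarith)]; linarith
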